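/- arXiv:2602.24094 — 4 statements merged into one kernel-verified Lean document; each statement's English description precedes it below -/
import Mathlib

section
/- Every nilpotent compatible Lie algebra g of positive finite dimension has nonzero center, where the center is Z(g) = {x : [x,g]_1 = 0 and [x,g]_2 = 0}. -/
open Submodule Module

section Defs
variable (K : Type*) [Field K] {g : Type*} [AddCommGroup g] [Module K g]

def IsBilin (b : g → g → g) : Prop :=
  (∀ x y z : g, b (x + y) z = b x z + b y z) ∧
  (∀ x y z : g, b x (y + z) = b x y + b x z) ∧
  (∀ (c : K) (x y : g), b (c • x) y = c • b x y) ∧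
  (∀ (c : K) (x y : g), b x (c • y) = c • b x y)

def IsSkew {g : Type*} [AddCommGroup g] (b : g → g → g) : Prop :=
  ∀ x y, b x y = - b y x

def JacId {g : Type*} [AddCommGroup g] (b : g → g → g) : Prop :=
  ∀ x y z, b (b x y) z + b (b y z) x + b (b z x) y = 0

def MixedJac {g : Type*} [AddCommGroup g] (b1 b2 : g → g → g) : Prop :=
  ∀ x y z, b2 (b1 x y) z + b2 (b1 y z) x + b2 (b1 z x) y
    + b1 (b2 x y) z + b1 (b2 y z) x + b1 (b2 z x) y = 0

def brSpan (b : g → g → g) (S T : Submodule K g) : Submodule K g :=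
  Submodule.span K {z | ∃ s ∈ S, ∃ t ∈ T, z = b s t}

def brSpan2 (b1 b2 : g → g → g) (S T : Submodule K g) : Submodule K g :=
  brSpan K b1 S T ⊔ brSpan K b2 S T

def lcs2 (b1 b2 : g → g → g) (I : Submodule K g) : ℕ → Submodule K g
  | 0 => I
  | k + 1 => brSpan2 K b1 b2 I (lcs2 b1 b2 I k)

def der2 (b1 b2 : g → g → g) : ℕ → Submodule K g
  | 0 => ⊤
  | k + 1 => brSpan2 K b1 b2 (der2 b1 b2 k) (der2 b1 b2 k)

def IsIdeal (b1 b2 : g → g → g) (I : Submodule K g) : Prop :=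
  ∀ x ∈ I, ∀ y : g, b1 x y ∈ I ∧ b2 x y ∈ I

def IsCLA (b1 b2 : g → g → g) : Prop :=
  IsBilin K b1 ∧ IsSkew b1 ∧ JacId b1 ∧
  IsBilin K b2 ∧ IsSkew b2 ∧ JacId b2 ∧ MixedJac b1 b2

end Defs

theorem stmt7 {K : Type*} [Field K] {g : Type*} [AddCommGroup g] [Module K g]
    [FiniteDimensional K g] (hdim : 0 < Module.finrank K g)
    (b1 b2 : g → g → g) (h : IsCLA K b1 b2)
    (hnil : ∃ k, lcs2 K b1 b2 ⊤ k = ⊥) :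
    ∃ x : g, x ≠ 0 ∧ ∀ y : g, b1 x y = 0 ∧ b2 x y = 0 := by
  classical
  have hnt : Nontrivial g := Module.nontrivial_of_finrank_pos hdim
  let n := Nat.find hnil
  have hn : lcs2 K b1 b2 ⊤ n = ⊥ := Nat.find_spec hnil
  have hnpos : 0 < n := by
    rcases Nat.eq_zero_or_pos n with h0 | h
    · exfalso
      have : lcs2 K b1 b2 (⊤ : Submodule K g) 0 = ⊥ := h0 ▸ hn
      simp only [lcs2] at this
      exact top_ne_bot this
    · exact h
  have hprev : lcs2 K b1 b2 (⊤ : Submodule K g) (n - 1) ≠ ⊥ :=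
    Nat.find_min hnil (by omega)
  obtain ⟨x, hx, hx0⟩ := (Submodule.ne_bot_iff _).mp hprev
  refine ⟨x, hx0, fun y => ?_⟩
  have key : ∀ b : g → g → g, b y x ∈ brSpan K b (⊤ : Submodule K g)
      (lcs2 K b1 b2 ⊤ (n - 1)) :=
    fun b => Submodule.subset_span ⟨y, trivial, x, hx, rfl⟩
  have h1z : b1 y x = 0 := by
    have h1 : brSpan K b1 (⊤ : Submodule K g) (lcs2 K b1 b2 ⊤ (n - 1)) ≤
        lcs2 K b1 b2 ⊤ n := by
      conv_rhs => rw [show n = (n - 1) + 1 by omega]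
      exact le_sup_left
    have := h1 (key b1)
    rw [hn] at this; simpa using this
  have h2z : b2 y x = 0 := by
    have h1 : brSpan K b2 (⊤ : Submodule K g) (lcs2 K b1 b2 ⊤ (n - 1)) ≤
        lcs2 K b1 b2 ⊤ n := by
      conv_rhs => rw [show n = (n - 1) + 1 by omega]
      exact le_sup_right
    have := h1 (key b2)
    rw [hn] at this; simpa using this
  obtain ⟨_, hsk1, _, _, hsk2, _, _⟩ := h
  constructor
  · rw [hsk1 x y, h1z, neg_zero]
  · rw [hsk2 x y, h2z, neg_zero]
end

section
/- The sum of two special nilpotent ideals of a compatible Lie algebra L is again a special nilpotent ideal of L. -/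
open Submodule Module

/-- An ideal `I` is special if `[[I,J]]` is an ideal for every ideal `J`. -/
def IsSpecialIdeal {K : Type*} [Field K] {g : Type*} [AddCommGroup g] [Module K g]
    (b1 b2 : g → g → g) (I : Submodule K g) : Prop :=
  IsIdeal K b1 b2 I ∧ ∀ J : Submodule K g, IsIdeal K b1 b2 J →
    IsIdeal K b1 b2 (brSpan2 K b1 b2 I J)

/-!
Every iterated bracket of length `a + b + 2` with entries from `I₁ ∪ I₂` has either at least
`a + 1` entries from `I₁` or at least `b + 1` entries from `I₂`; since the terms of the lower
central series of a special ideal are ideals, such a bracket lies in `C^a(I₁)` or in `C^b(I₂)`.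
Hence `C^{a+b+1}(I₁ + I₂) ⊆ C^a(I₁) + C^b(I₂)`, which vanishes for `a, b` large.
-/

section BracketSpan

variable {K : Type*} [Field K] {g : Type*} [AddCommGroup g] [Module K g]
  {b b1 b2 : g → g → g} {S S₁ S₂ T T₁ T₂ U : Submodule K g}

theorem brSpan_le (h : ∀ s ∈ S, ∀ t ∈ T, b s t ∈ U) : brSpan K b S T ≤ U :=
  span_le.mpr fun _ ⟨s, hs, t, ht, hz⟩ => hz ▸ h s hs t ht

theorem mem_brSpan {s t : g} (hs : s ∈ S) (ht : t ∈ T) : b s t ∈ brSpan K b S T :=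
  subset_span ⟨s, hs, t, ht, rfl⟩

theorem brSpan_mono (hS : S₁ ≤ S₂) (hT : T₁ ≤ T₂) : brSpan K b S₁ T₁ ≤ brSpan K b S₂ T₂ :=
  brSpan_le fun _ hs _ ht => mem_brSpan (hS hs) (hT ht)

theorem brSpan_sup_left (hb : ∀ x y z, b (x + y) z = b x z + b y z) :
    brSpan K b (S₁ ⊔ S₂) T = brSpan K b S₁ T ⊔ brSpan K b S₂ T := by
  refine le_antisymm (brSpan_le fun s hs t ht => ?_)
    (sup_le (brSpan_mono le_sup_left le_rfl) (brSpan_mono le_sup_right le_rfl))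
  obtain ⟨s₁, hs₁, s₂, hs₂, rfl⟩ := mem_sup.mp hs
  rw [hb]
  exact add_mem_sup (mem_brSpan hs₁ ht) (mem_brSpan hs₂ ht)

theorem brSpan_sup_right_le (hb : ∀ x y z, b x (y + z) = b x y + b x z) :
    brSpan K b S (T₁ ⊔ T₂) ≤ brSpan K b S T₁ ⊔ brSpan K b S T₂ := by
  refine brSpan_le fun s hs t ht => ?_
  obtain ⟨t₁, ht₁, t₂, ht₂, rfl⟩ := mem_sup.mp ht
  rw [hb]
  exact add_mem_sup (mem_brSpan hs ht₁) (mem_brSpan hs ht₂)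

theorem brSpan2_sup_left (hb1 : IsBilin K b1) (hb2 : IsBilin K b2) :
    brSpan2 K b1 b2 (S₁ ⊔ S₂) T = brSpan2 K b1 b2 S₁ T ⊔ brSpan2 K b1 b2 S₂ T := by
  simp only [brSpan2, brSpan_sup_left hb1.1, brSpan_sup_left hb2.1]
  exact sup_sup_sup_comm _ _ _ _

theorem brSpan2_sup_right_le (hb1 : IsBilin K b1) (hb2 : IsBilin K b2) :
    brSpan2 K b1 b2 S (T₁ ⊔ T₂) ≤ brSpan2 K b1 b2 S T₁ ⊔ brSpan2 K b1 b2 S T₂ :=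
  (sup_le_sup (brSpan_sup_right_le hb1.2.1) (brSpan_sup_right_le hb2.2.1)).trans_eq
    (sup_sup_sup_comm _ _ _ _)

theorem brSpan2_mono (hS : S₁ ≤ S₂) (hT : T₁ ≤ T₂) :
    brSpan2 K b1 b2 S₁ T₁ ≤ brSpan2 K b1 b2 S₂ T₂ :=
  sup_le_sup (brSpan_mono hS hT) (brSpan_mono hS hT)

end BracketSpan

section Ideals

variable {K : Type*} [Field K] {g : Type*} [AddCommGroup g] [Module K g]
  {b1 b2 : g → g → g} {I J S : Submodule K g}

theorem IsIdeal.sup (hb1 : IsBilin K b1) (hb2 : IsBilin K b2) (hI : IsIdeal K b1 b2 I)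
    (hJ : IsIdeal K b1 b2 J) : IsIdeal K b1 b2 (I ⊔ J) := by
  intro x hx y
  obtain ⟨x₁, hx₁, x₂, hx₂, rfl⟩ := mem_sup.mp hx
  rw [hb1.1, hb2.1]
  exact ⟨add_mem_sup (hI x₁ hx₁ y).1 (hJ x₂ hx₂ y).1, add_mem_sup (hI x₁ hx₁ y).2 (hJ x₂ hx₂ y).2⟩

theorem IsIdeal.brSpan2_le_left (hI : IsIdeal K b1 b2 I) : brSpan2 K b1 b2 I S ≤ I :=
  sup_le (brSpan_le fun s hs t _ => (hI s hs t).1) (brSpan_le fun s hs t _ => (hI s hs t).2)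

theorem IsIdeal.brSpan2_le_right (hs1 : IsSkew b1) (hs2 : IsSkew b2) (hI : IsIdeal K b1 b2 I) :
    brSpan2 K b1 b2 S I ≤ I := by
  refine sup_le (brSpan_le fun s _ t ht => ?_) (brSpan_le fun s _ t ht => ?_)
  · rw [hs1]; exact I.neg_mem (hI t ht s).1
  · rw [hs2]; exact I.neg_mem (hI t ht s).2

theorem IsSpecialIdeal.sup (hb1 : IsBilin K b1) (hb2 : IsBilin K b2)
    (hI : IsSpecialIdeal b1 b2 I) (hJ : IsSpecialIdeal b1 b2 J) :
    IsSpecialIdeal b1 b2 (I ⊔ J) := by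
  refine ⟨hI.1.sup hb1 hb2 hJ.1, fun L hL => ?_⟩
  rw [brSpan2_sup_left hb1 hb2]
  exact (hI.2 L hL).sup hb1 hb2 (hJ.2 L hL)

theorem IsSpecialIdeal.isIdeal_lcs2 (hI : IsSpecialIdeal b1 b2 I) (n : ℕ) :
    IsIdeal K b1 b2 (lcs2 K b1 b2 I n) := by
  induction n with
  | zero => exact hI.1
  | succ n ih => exact hI.2 _ ih

end Ideals

section LowerCentralSeries

variable {K : Type*} [Field K] {g : Type*} [AddCommGroup g] [Module K g]
  {b1 b2 : g → g → g} {I₁ I₂ : Submodule K g}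

theorem brSpan2_le_sup_of_le_sup (hb1 : IsBilin K b1) (hb2 : IsBilin K b2) (hs1 : IsSkew b1)
    (hs2 : IsSkew b2) {S X Y J : Submodule K g} (hJ : IsIdeal K b1 b2 J) (hX : X ≤ Y ⊔ J) :
    brSpan2 K b1 b2 S X ≤ brSpan2 K b1 b2 S Y ⊔ J :=
  calc brSpan2 K b1 b2 S X ≤ brSpan2 K b1 b2 S (Y ⊔ J) := brSpan2_mono le_rfl hX
    _ ≤ brSpan2 K b1 b2 S Y ⊔ brSpan2 K b1 b2 S J := brSpan2_sup_right_le hb1 hb2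
    _ ≤ brSpan2 K b1 b2 S Y ⊔ J := sup_le_sup_left (hJ.brSpan2_le_right hs1 hs2) _

theorem lcs2_sup_le_sup_lcs2 (hb1 : IsBilin K b1) (hb2 : IsBilin K b2) (hs1 : IsSkew b1)
    (hs2 : IsSkew b2) (hI₁ : IsSpecialIdeal b1 b2 I₁) (hI₂ : IsSpecialIdeal b1 b2 I₂) (a b : ℕ) :
    lcs2 K b1 b2 (I₁ ⊔ I₂) (a + b + 1) ≤ lcs2 K b1 b2 I₁ a ⊔ lcs2 K b1 b2 I₂ b := by
  suffices key : ∀ n a b, a + b = n →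
      lcs2 K b1 b2 (I₁ ⊔ I₂) (n + 1) ≤ lcs2 K b1 b2 I₁ a ⊔ lcs2 K b1 b2 I₂ b from
    key _ a b rfl
  intro n
  induction n with
  | zero =>
    intro a b hab
    obtain ⟨rfl, rfl⟩ : a = 0 ∧ b = 0 := by omega
    exact (hI₁.1.sup hb1 hb2 hI₂.1).brSpan2_le_left
  | succ n ih =>
    intro a b hab
    rw [lcs2, brSpan2_sup_left hb1 hb2]
    refine sup_le ?_ ?_
    · cases a with
      | zero => exact hI₁.1.brSpan2_le_left.trans le_sup_left
      | succ a =>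
        exact brSpan2_le_sup_of_le_sup hb1 hb2 hs1 hs2 (hI₂.isIdeal_lcs2 b) (ih a b (by omega))
    · cases b with
      | zero => exact hI₂.1.brSpan2_le_left.trans le_sup_right
      | succ b =>
        rw [sup_comm (lcs2 K b1 b2 I₁ a)]
        exact brSpan2_le_sup_of_le_sup hb1 hb2 hs1 hs2 (hI₁.isIdeal_lcs2 a)
          ((ih a b (by omega)).trans_eq (sup_comm _ _))

end LowerCentralSeries

theorem stmt11 {K : Type*} [Field K] {g : Type*} [AddCommGroup g] [Module K g]
    (b1 b2 : g → g → g) (h : IsCLA K b1 b2) (I1 I2 : Submodule K g)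
    (hI1 : IsSpecialIdeal b1 b2 I1) (hI2 : IsSpecialIdeal b1 b2 I2)
    (hn1 : ∃ s, lcs2 K b1 b2 I1 s = ⊥) (hn2 : ∃ s, lcs2 K b1 b2 I2 s = ⊥) :
    IsSpecialIdeal b1 b2 (I1 ⊔ I2) ∧ ∃ s, lcs2 K b1 b2 (I1 ⊔ I2) s = ⊥ := by
  obtain ⟨hb1, hs1, -, hb2, hs2, -, -⟩ := h
  obtain ⟨s₁, hs₁⟩ := hn1
  obtain ⟨s₂, hs₂⟩ := hn2
  refine ⟨hI1.sup hb1 hb2 hI2, s₁ + s₂ + 1, le_bot_iff.mp ?_⟩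
  calc lcs2 K b1 b2 (I1 ⊔ I2) (s₁ + s₂ + 1) ≤ lcs2 K b1 b2 I1 s₁ ⊔ lcs2 K b1 b2 I2 s₂ :=
        lcs2_sup_le_sup_lcs2 hb1 hb2 hs1 hs2 hI1 hI2 s₁ s₂
    _ = ⊥ := by rw [hs₁, hs₂, bot_sup_eq]
end

section
/- Let L_n be the model filiform Lie algebra with basis e1,…,en and brackets [e1,ei] = e_{i+1} for 2 ≤ i ≤ n-1 (other brackets zero). Then the bilinear skew map Ψ_R defined by Ψ_R(e2,ei) = e_{i+2} for 3 ≤ i ≤ n-2 (other products zero) itself satisfies the Jacobi identity, and the sum bracket [e1,ei]+Ψ_R defines a Lie algebra (namely R_n). Consequently (L_n, R_n) form a compatible Lie algebra: every linear combination λ1·[-,-]_{L_n} + λ2·Ψ_R is a Lie bracket. -/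
open Submodule Module

/-- `ebn n t` is the standard basis vector `e_t` (1-indexed, `t = 1,…,n`) of `Fin n → ℂ`;
it is `0` for `t` out of range. -/
def ebn (n t : ℕ) : Fin n → ℂ := fun j => if (j : ℕ) + 1 = t then 1 else 0

/-- The bracket table of the model filiform Lie algebra `L_n`:
`[e_1, e_i] = e_{i+1}` for `2 ≤ i ≤ n - 1`, extended skew-symmetrically,
all other products zero. -/
def TLn (n : ℕ) : ℕ → ℕ → (Fin n → ℂ) := fun i j =>
  if i = 1 ∧ 2 ≤ j ∧ j ≤ n - 1 then ebn n (j + 1)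
  else if j = 1 ∧ 2 ≤ i ∧ i ≤ n - 1 then -(ebn n (i + 1))
  else 0

/-- The table of the cocycle `Ψ_R`: `Ψ_R(e_2, e_i) = e_{i+2}` for `3 ≤ i ≤ n - 2`,
extended skew-symmetrically, all other products zero. -/
def TPsiR (n : ℕ) : ℕ → ℕ → (Fin n → ℂ) := fun i j =>
  if i = 2 ∧ 3 ≤ j ∧ j ≤ n - 2 then ebn n (j + 2)
  else if j = 2 ∧ 3 ≤ i ∧ i ≤ n - 2 then -(ebn n (i + 2))
  else 0

/-!
Both brackets are instances of `[e_{k+1}, e_i] = e_{i+k+1}` (`k = 0` for `L_n`, `k = 1` for `Ψ_R`),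
which in coordinates is an explicit polynomial formula. A bilinear map is determined by its values
on a basis, so `b0` and `bR` are these formulas, and the Jacobi identity of each, as well as the
mixed Jacobi identity of the pair, are coordinatewise polynomial identities. The Jacobiator of
`l₁ b₀ + l₂ b_R` is `l₁² J(b₀) + l₂² J(b_R) + l₁ l₂ M(b₀, b_R)`, with `M` the mixed Jacobiator.
-/

section CompatibleBrackets
variable {K : Type*} [Field K] {g : Type*} [AddCommGroup g] [Module K g]

lemma IsSkew.smul_add {b₁ b₂ : g → g → g} (h₁ : IsSkew b₁) (h₂ : IsSkew b₂) (l₁ l₂ : K) :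
    IsSkew (fun x y => l₁ • b₁ x y + l₂ • b₂ x y) := by
  intro x y
  dsimp only
  rw [h₁ x y, h₂ x y, smul_neg, smul_neg, neg_add]

lemma JacId.smul_add {b₁ b₂ : g → g → g} (hb₁ : IsBilin K b₁) (hb₂ : IsBilin K b₂)
    (h₁ : JacId b₁) (h₂ : JacId b₂) (h₁₂ : MixedJac b₁ b₂) (l₁ l₂ : K) :
    JacId (fun x y => l₁ • b₁ x y + l₂ • b₂ x y) := by
  intro x y z
  simp only [hb₁.1, hb₂.1, hb₁.2.2.1, hb₂.2.2.1]
  linear_combination (norm := module)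
    (l₁ * l₁) • h₁ x y z + (l₂ * l₂) • h₂ x y z + (l₁ * l₂) • h₁₂ x y z

def IsBilin.toLinearMap₂ {b : g → g → g} (hb : IsBilin K b) : g →ₗ[K] g →ₗ[K] g :=
  LinearMap.mk₂ K b hb.1 hb.2.2.1 hb.2.1 hb.2.2.2

lemma IsBilin.ext_basis {ι : Type*} (B : Basis ι K g) {b b' : g → g → g}
    (hb : IsBilin K b) (hb' : IsBilin K b') (h : ∀ i j, b (B i) (B j) = b' (B i) (B j)) :
    b = b' := by
  have := LinearMap.ext_basis (B := hb.toLinearMap₂) (B' := hb'.toLinearMap₂) B B h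
  funext x y
  exact LinearMap.congr_fun₂ this x y

end CompatibleBrackets

/-- The bracket `[e_{k+1}, e_i] = e_{i+k+1}` for `i ≥ k + 2`, extended skew-symmetrically, in
coordinates (`Fin n` is 0-indexed, so `e_{t}` is the coordinate `t - 1`). -/
def shiftBracket {R : Type*} [CommRing R] (n k : ℕ) (x y : Fin n → R) : Fin n → R := fun j =>
  if h : 2 * k + 2 ≤ (j : ℕ) then
    x ⟨k, by omega⟩ * y ⟨j - (k + 1), by omega⟩ - y ⟨k, by omega⟩ * x ⟨j - (k + 1), by omega⟩
  else 0

namespace shiftBracket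
variable {R : Type*} [CommRing R] (n k : ℕ)

lemma isSkew : IsSkew (shiftBracket (R := R) n k) := by
  intro x y
  funext j
  simp only [shiftBracket, Pi.neg_apply]
  split_ifs <;> ring

lemma isBilin {K : Type*} [Field K] :
    IsBilin K (shiftBracket (R := K) n k) := by
  refine ⟨?_, ?_, ?_, ?_⟩ <;> intros <;> funext j <;>
    simp only [shiftBracket, Pi.add_apply, Pi.smul_apply, smul_eq_mul] <;> split_ifs <;> ring

lemma jacId : JacId (shiftBracket (R := R) n k) := by
  intro x y z
  funext j
  simp only [shiftBracket, Pi.add_apply, Pi.zero_apply]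
  split_ifs <;> first | ring1 | (exfalso; omega)

lemma mixedJac_zero_one : MixedJac (shiftBracket (R := R) n 0) (shiftBracket n 1) := by
  intro x y z
  funext j
  simp only [shiftBracket, Pi.add_apply, Pi.zero_apply, Nat.sub_sub, Nat.reduceAdd, Nat.reduceMul]
  split_ifs <;> first
    | ring1
    | (exfalso; omega)
    | (have hj : (j : ℕ) = 4 := by omega
       simp only [hj, Nat.reduceSub]
       ring1)

end shiftBracket

lemma ebn_succ (n : ℕ) (i : Fin n) : ebn n (i + 1) = Pi.basisFun ℂ (Fin n) i := by
  funext j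
  simp [ebn, Pi.single_apply, eq_comm, Fin.val_inj]

lemma shiftBracket_zero_ebn (n : ℕ) (i j : Fin n) :
    shiftBracket n 0 (ebn n (i + 1)) (ebn n (j + 1)) = TLn n (i + 1) (j + 1) := by
  funext t
  simp only [shiftBracket, TLn]
  split_ifs <;> simp only [ebn, Pi.neg_apply, Pi.zero_apply] <;> split_ifs <;>
    first | omega | norm_num

lemma shiftBracket_one_ebn (n : ℕ) (i j : Fin n) :
    shiftBracket n 1 (ebn n (i + 1)) (ebn n (j + 1)) = TPsiR n (i + 1) (j + 1) := by
  funext t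
  simp only [shiftBracket, TPsiR]
  split_ifs <;> simp only [ebn, Pi.neg_apply, Pi.zero_apply] <;> split_ifs <;>
    first | omega | norm_num

theorem stmt13_general (n : ℕ)
    (b0 bR : (Fin n → ℂ) → (Fin n → ℂ) → (Fin n → ℂ))
    (hb0 : IsBilin ℂ b0) (hbR : IsBilin ℂ bR)
    (h0 : ∀ i j : ℕ, 1 ≤ i → i ≤ n → 1 ≤ j → j ≤ n → b0 (ebn n i) (ebn n j) = TLn n i j)
    (hR : ∀ i j : ℕ, 1 ≤ i → i ≤ n → 1 ≤ j → j ≤ n → bR (ebn n i) (ebn n j) = TPsiR n i j) :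
    JacId bR ∧
    (IsSkew (fun x y => b0 x y + bR x y) ∧ JacId (fun x y => b0 x y + bR x y)) ∧
    (∀ l1 l2 : ℂ, IsSkew (fun x y => l1 • b0 x y + l2 • bR x y) ∧
      JacId (fun x y => l1 • b0 x y + l2 • bR x y)) := by
  obtain rfl : b0 = shiftBracket n 0 :=
    hb0.ext_basis (Pi.basisFun ℂ (Fin n)) (shiftBracket.isBilin n 0) fun i j => by
      rw [← ebn_succ, ← ebn_succ, h0 _ _ (by omega) i.isLt (by omega) j.isLt,
        shiftBracket_zero_ebn]
  obtain rfl : bR = shiftBracket n 1 :=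
    hbR.ext_basis (Pi.basisFun ℂ (Fin n)) (shiftBracket.isBilin n 1) fun i j => by
      rw [← ebn_succ, ← ebn_succ, hR _ _ (by omega) i.isLt (by omega) j.isLt,
        shiftBracket_one_ebn]
  have combination (l₁ l₂ : ℂ) :=
    And.intro ((shiftBracket.isSkew (R := ℂ) n 0).smul_add (shiftBracket.isSkew n 1) l₁ l₂)
      (JacId.smul_add (shiftBracket.isBilin n 0) (shiftBracket.isBilin n 1)
        (shiftBracket.jacId n 0) (shiftBracket.jacId n 1) (shiftBracket.mixedJac_zero_one n) l₁ l₂)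
  refine ⟨shiftBracket.jacId n 1, ?_, combination⟩
  simpa only [one_smul] using combination 1 1

theorem stmt13 (n : ℕ) (hn : 5 ≤ n)
    (b0 bR : (Fin n → ℂ) → (Fin n → ℂ) → (Fin n → ℂ))
    (hb0 : IsBilin ℂ b0) (hbR : IsBilin ℂ bR)
    (h0 : ∀ i j : ℕ, 1 ≤ i → i ≤ n → 1 ≤ j → j ≤ n → b0 (ebn n i) (ebn n j) = TLn n i j)
    (hR : ∀ i j : ℕ, 1 ≤ i → i ≤ n → 1 ≤ j → j ≤ n → bR (ebn n i) (ebn n j) = TPsiR n i j) :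
    JacId bR ∧
    (IsSkew (fun x y => b0 x y + bR x y) ∧ JacId (fun x y => b0 x y + bR x y)) ∧
    (∀ l1 l2 : ℂ, IsSkew (fun x y => l1 • b0 x y + l2 • bR x y) ∧
      JacId (fun x y => l1 • b0 x y + l2 • bR x y)) :=
  stmt13_general n b0 bR hb0 hbR h0 hR
end

section
/- The compatible Lie algebra N with components L_n and R_n (on a common basis e1,…,en) is nilpotent: its descending central series C^{k+1}(N) = [N,C^k(N)]_{L_n} + [N,C^k(N)]_{R_n} reaches zero. -/
open Submodule Module

namespace Stmt14Aux

/-- Submodule of vectors supported on coordinates `j` with `j+1 ≥ m`. -/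
noncomputable def W (n m : ℕ) : Submodule ℂ (Fin n → ℂ) where
  carrier := {v | ∀ j : Fin n, (j : ℕ) + 1 < m → v j = 0}
  add_mem' := by intro a b ha hb j hj; simp only [Pi.add_apply, ha j hj, hb j hj, add_zero]
  zero_mem' := by intro j hj; rfl
  smul_mem' := by intro c v hv j hj; simp only [Pi.smul_apply, hv j hj, smul_zero]

lemma mem_W {n m : ℕ} {v : Fin n → ℂ} :
    v ∈ W n m ↔ ∀ j : Fin n, (j : ℕ) + 1 < m → v j = 0 := Iff.rfl

lemma ebn_mem_W {n m t : ℕ} (h : m ≤ t) : ebn n t ∈ W n m := by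
  intro j hj
  simp only [ebn]
  rw [if_neg]
  omega

lemma W_mono {n m m' : ℕ} (h : m ≤ m') : W n m' ≤ W n m :=
  fun v hv j hj => hv j (lt_of_lt_of_le hj h)

lemma ebn_basis {n : ℕ} (i : Fin n) :
    ebn n ((i : ℕ) + 1) = fun j => if i = j then (1 : ℂ) else 0 := by
  funext j
  simp only [ebn]
  rcases eq_or_ne i j with h | h
  · subst h; simp
  · have h' : (j : ℕ) + 1 ≠ (i : ℕ) + 1 := fun hc => h (Fin.val_injective (by omega)).symm
    rw [if_neg h', if_neg h]

lemma bilin_expand {n : ℕ} {b : (Fin n → ℂ) → (Fin n → ℂ) → (Fin n → ℂ)}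
    (hb : IsBilin ℂ b) (x y : Fin n → ℂ) :
    b x y = ∑ i : Fin n, ∑ j : Fin n,
      (x i * y j) • b (ebn n ((i : ℕ) + 1)) (ebn n ((j : ℕ) + 1)) := by
  obtain ⟨h1, h2, h3, h4⟩ := hb
  let B : (Fin n → ℂ) →ₗ[ℂ] (Fin n → ℂ) →ₗ[ℂ] (Fin n → ℂ) :=
    LinearMap.mk₂ ℂ b h1 h3 h2 h4
  have hx : x = ∑ i : Fin n, x i • ebn n ((i : ℕ) + 1) := by
    conv_lhs => rw [pi_eq_sum_univ x]
    exact Finset.sum_congr rfl fun i _ => by rw [ebn_basis]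
  have hy : y = ∑ j : Fin n, y j • ebn n ((j : ℕ) + 1) := by
    conv_lhs => rw [pi_eq_sum_univ y]
    exact Finset.sum_congr rfl fun j _ => by rw [ebn_basis]
  have : B x y = ∑ i : Fin n, ∑ j : Fin n,
      (x i * y j) • B (ebn n ((i : ℕ) + 1)) (ebn n ((j : ℕ) + 1)) := by
    conv_lhs => rw [hx, hy]
    simp only [map_sum, LinearMap.sum_apply, map_smul, LinearMap.smul_apply,
      Finset.smul_sum, smul_smul]
    rw [Finset.sum_comm]
    exact Finset.sum_congr rfl fun i _ => Finset.sum_congr rfl fun j _ => by rw [mul_comm]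
  exact this

lemma bilin_mem {n : ℕ} {b : (Fin n → ℂ) → (Fin n → ℂ) → (Fin n → ℂ)}
    (hb : IsBilin ℂ b) (S : Submodule ℂ (Fin n → ℂ)) (x y : Fin n → ℂ)
    (h : ∀ i j : Fin n, y j ≠ 0 → b (ebn n ((i : ℕ) + 1)) (ebn n ((j : ℕ) + 1)) ∈ S) :
    b x y ∈ S := by
  rw [bilin_expand hb]
  refine Submodule.sum_mem _ fun i _ => Submodule.sum_mem _ fun j _ => ?_
  by_cases hy : y j = 0
  · simp [hy]
  · exact S.smul_mem _ (h i j hy)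

end Stmt14Aux

theorem stmt14 (n : ℕ) (hn : 5 ≤ n)
    (b0 bRn : (Fin n → ℂ) → (Fin n → ℂ) → (Fin n → ℂ))
    (hb0 : IsBilin ℂ b0) (hbRn : IsBilin ℂ bRn)
    (h0 : ∀ i j : ℕ, 1 ≤ i → i ≤ n → 1 ≤ j → j ≤ n → b0 (ebn n i) (ebn n j) = TLn n i j)
    (hRn : ∀ i j : ℕ, 1 ≤ i → i ≤ n → 1 ≤ j → j ≤ n →
      bRn (ebn n i) (ebn n j) = TLn n i j + TPsiR n i j) :
    ∃ k, lcs2 ℂ b0 bRn (⊤ : Submodule ℂ (Fin n → ℂ)) k = ⊥ := by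
  classical
  open Stmt14Aux in
  -- value of the brackets on basis vectors
  have hb0val : ∀ i j : Fin n, b0 (ebn n ((i:ℕ)+1)) (ebn n ((j:ℕ)+1)) = TLn n ((i:ℕ)+1) ((j:ℕ)+1) := by
    intro i j
    exact h0 _ _ (by omega) (by omega) (by omega) (by omega)
  have hbRval : ∀ i j : Fin n, bRn (ebn n ((i:ℕ)+1)) (ebn n ((j:ℕ)+1))
      = TLn n ((i:ℕ)+1) ((j:ℕ)+1) + TPsiR n ((i:ℕ)+1) ((j:ℕ)+1) := by
    intro i j
    exact hRn _ _ (by omega) (by omega) (by omega) (by omega)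
  -- membership of table values
  have hTL3 : ∀ i j : Fin n, TLn n ((i:ℕ)+1) ((j:ℕ)+1) ∈ W n 3 := by
    intro i j
    unfold TLn
    split_ifs with h1 h2
    · exact ebn_mem_W (by omega)
    · exact (W n 3).neg_mem (ebn_mem_W (by omega))
    · exact (W n 3).zero_mem
  have hTP3 : ∀ i j : Fin n, TPsiR n ((i:ℕ)+1) ((j:ℕ)+1) ∈ W n 3 := by
    intro i j
    unfold TPsiR
    split_ifs with h1 h2
    · exact ebn_mem_W (by omega)
    · exact (W n 3).neg_mem (ebn_mem_W (by omega))
    · exact (W n 3).zero_mem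
  have hTLm : ∀ (m : ℕ), 3 ≤ m → ∀ i j : Fin n, m ≤ (j:ℕ)+1 →
      TLn n ((i:ℕ)+1) ((j:ℕ)+1) ∈ W n (m+1) := by
    intro m hm i j hj
    unfold TLn
    split_ifs with h1 h2
    · exact ebn_mem_W (by omega)
    · exact absurd h2.1 (by omega)
    · exact (W n (m+1)).zero_mem
  have hTPm : ∀ (m : ℕ), 3 ≤ m → ∀ i j : Fin n, m ≤ (j:ℕ)+1 →
      TPsiR n ((i:ℕ)+1) ((j:ℕ)+1) ∈ W n (m+1) := by
    intro m hm i j hj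
    unfold TPsiR
    split_ifs with h1 h2
    · exact ebn_mem_W (by omega)
    · exact absurd h2.1 (by omega)
    · exact (W n (m+1)).zero_mem
  -- brSpan2 of anything with W m lands in W (m+1)
  have hstep : ∀ (m : ℕ), 3 ≤ m → ∀ S : Submodule ℂ (Fin n → ℂ), S ≤ W n m →
      brSpan2 ℂ b0 bRn ⊤ S ≤ W n (m+1) := by
    intro m hm S hS
    refine sup_le (Submodule.span_le.mpr ?_) (Submodule.span_le.mpr ?_)
    · rintro z ⟨s, -, t, ht, rfl⟩
      refine bilin_mem hb0 _ s t fun i j hj => ?_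
      have hjm : m ≤ (j:ℕ)+1 := by
        by_contra hc
        exact hj (hS ht j (by omega))
      rw [hb0val]
      exact hTLm m hm i j hjm
    · rintro z ⟨s, -, t, ht, rfl⟩
      refine bilin_mem hbRn _ s t fun i j hj => ?_
      have hjm : m ≤ (j:ℕ)+1 := by
        by_contra hc
        exact hj (hS ht j (by omega))
      rw [hbRval]
      exact (W n (m+1)).add_mem (hTLm m hm i j hjm) (hTPm m hm i j hjm)
  -- base case
  have hbase : brSpan2 ℂ b0 bRn ⊤ ⊤ ≤ W n 3 := by
    refine sup_le (Submodule.span_le.mpr ?_) (Submodule.span_le.mpr ?_)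
    · rintro z ⟨s, -, t, -, rfl⟩
      refine bilin_mem hb0 _ s t fun i j _ => ?_
      rw [hb0val]; exact hTL3 i j
    · rintro z ⟨s, -, t, -, rfl⟩
      refine bilin_mem hbRn _ s t fun i j _ => ?_
      rw [hbRval]; exact (W n 3).add_mem (hTL3 i j) (hTP3 i j)
  -- induction
  have hc : ∀ k : ℕ, lcs2 ℂ b0 bRn (⊤ : Submodule ℂ (Fin n → ℂ)) (k+1) ≤ W n (k+3) := by
    intro k
    induction k with
    | zero =>
      show brSpan2 ℂ b0 bRn ⊤ (lcs2 ℂ b0 bRn ⊤ 0) ≤ W n 3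
      exact hbase
    | succ k ih =>
      show brSpan2 ℂ b0 bRn ⊤ (lcs2 ℂ b0 bRn ⊤ (k+1)) ≤ W n (k+4)
      have := hstep (k+3) (by omega) _ ih
      exact le_trans this (le_of_eq (by ring_nf))
  refine ⟨n - 1, le_bot_iff.mp ?_⟩
  obtain ⟨k, hk⟩ : ∃ k, n - 1 = k + 1 := ⟨n - 2, by omega⟩
  rw [hk]
  refine le_trans (hc k) ?_
  intro v hv
  have hz : v = 0 := by
    funext j
    exact hv j (by omega)
  simp [hz]
end
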